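/- Let w ∈ S_n and let w = s_{i_1} s_{i_2} ⋯ s_{i_l} be a reduced decomposition into simple transpositions s_i = (i, i+1), where l is the Coxeter length of w. For t ∈ K and a simple index i, let x_{-α_i}(t) = 1 + t E_{i+1,i} be the lower unitriangular elementary matrix. Then the Zariski closure in the n×n matrices of the set { x_{-α_{i_1}}(t_1) ⋯ x_{-α_{i_l}}(t_l) · b : t_1, …, t_l ∈ K, b ∈ B } equals the Zariski closure of the double coset B ŵ B; in particular the set N'_{-α_{i_1}} ⋯ N'_{-α_{i_l}} B obtained by restricting to nonzero parameters t_j is dense in B ŵ B. -/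

import Mathlib

open Matrix MvPolynomial

/-- Evaluation of a polynomial in the matrix-entry variables at a matrix. -/
noncomputable def evalMat {K : Type} [Field K] {n : ℕ}
    (m : Matrix (Fin n) (Fin n) K) (f : MvPolynomial (Fin n × Fin n) K) : K :=
  MvPolynomial.eval (fun p => m p.1 p.2) f

/-- Zariski closure of a set of matrices: the zero locus of its vanishing ideal. -/
def zClosure {K : Type} [Field K] {n : ℕ} (S : Set (Matrix (Fin n) (Fin n) K)) :
    Set (Matrix (Fin n) (Fin n) K) :=
  {m | ∀ f : MvPolynomial (Fin n × Fin n) K,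
      (∀ s ∈ S, evalMat s f = 0) → evalMat m f = 0}

/-- The group `B` of invertible upper triangular matrices. -/
def upperB (K : Type) [Field K] (n : ℕ) : Set (Matrix (Fin n) (Fin n) K) :=
  {b | IsUnit b ∧ ∀ i j : Fin n, j < i → b i j = 0}

/-- The permutation matrix of `w`. -/
def permMat (K : Type) [Field K] {n : ℕ} (w : Equiv.Perm (Fin n)) :
    Matrix (Fin n) (Fin n) K :=
  Matrix.of fun i j => if w j = i then 1 else 0

/-- The space `n₋` of strictly lower triangular matrices. -/
def lowerNil (K : Type) [Field K] (n : ℕ) : Set (Matrix (Fin n) (Fin n) K) :=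
  {x | ∀ i j : Fin n, i ≤ j → x i j = 0}

/-- The Bruhat double coset `B ŵ B`. -/
def bruhatCell {K : Type} [Field K] {n : ℕ} (w : Equiv.Perm (Fin n)) :
    Set (Matrix (Fin n) (Fin n) K) :=
  {m | ∃ b₁ ∈ upperB K n, ∃ b₂ ∈ upperB K n, m = b₁ * permMat K w * b₂}

/-- The affine part `Ω_w` of the Schubert variety of `w`. -/
def schubertAffine {K : Type} [Field K] {n : ℕ} (w : Equiv.Perm (Fin n)) :
    Set (Matrix (Fin n) (Fin n) K) :=
  {x ∈ lowerNil K n | (1 + x) ∈ zClosure (bruhatCell w)}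

/-- The tangent cone `C_w` at the origin: the common zeroes in `n₋` of the lowest
forms of all nonzero polynomials in the vanishing ideal of `Ω_w`.  (A nonzero `f`
has a unique `d` such that all homogeneous components below `d` vanish while the
component in degree `d` is nonzero; that component is the lowest form `f₀`.) -/
def tangentCone {K : Type} [Field K] {n : ℕ} (w : Equiv.Perm (Fin n)) :
    Set (Matrix (Fin n) (Fin n) K) :=
  {x ∈ lowerNil K n | ∀ f : MvPolynomial (Fin n × Fin n) K,
      (∀ s ∈ schubertAffine w, evalMat s f = 0) →
      ∀ d : ℕ, (∀ e < d, MvPolynomial.homogeneousComponent e f = 0) →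
        MvPolynomial.homogeneousComponent d f ≠ 0 →
        evalMat x (MvPolynomial.homogeneousComponent d f) = 0}

/-- The Coxeter length of `w ∈ Sₙ`: the number of inversions of `w`, which equals
the minimal number of simple transpositions in an expression of `w` as their
product. -/
def coxLength {n : ℕ} (w : Equiv.Perm (Fin n)) : ℕ :=
  (Finset.univ.filter (fun p : Fin n × Fin n => p.1 < p.2 ∧ w p.2 < w p.1)).card


variable {K : Type} [Field K] {n : ℕ}

theorem Equiv.Perm.apply_inv_self {α : Type*} (f : Equiv.Perm α) (x : α) : f (f⁻¹ x) = x :=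
  f.apply_symm_apply x

theorem Equiv.Perm.inv_apply_self {α : Type*} (f : Equiv.Perm α) (x : α) : f⁻¹ (f x) = x :=
  f.symm_apply_apply x

lemma subset_zClosure (S : Set (Matrix (Fin n) (Fin n) K)) : S ⊆ zClosure S :=
  fun m hm f hf => hf m hm

lemma zClosure_min {S T : Set (Matrix (Fin n) (Fin n) K)} (h : S ⊆ zClosure T) :
    zClosure S ⊆ zClosure T := by
  intro m hm f hf
  exact hm f (fun s hs => h hs f hf)

lemma evalMat_bind_left (g x : Matrix (Fin n) (Fin n) K) (f : MvPolynomial (Fin n × Fin n) K) :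
    evalMat x (MvPolynomial.bind₁
      (fun p : Fin n × Fin n => ∑ k, MvPolynomial.C (g p.1 k) * MvPolynomial.X (k, p.2)) f)
      = evalMat (g * x) f := by
  unfold evalMat
  rw [MvPolynomial.eval, MvPolynomial.eval₂Hom_bind₁]
  simp [Matrix.mul_apply]

lemma mul_mem_zClosure {T U : Set (Matrix (Fin n) (Fin n) K)} (g : Matrix (Fin n) (Fin n) K)
    (hTU : ∀ x ∈ T, g * x ∈ zClosure U) {m} (hm : m ∈ zClosure T) : g * m ∈ zClosure U := by
  intro f hf
  rw [← evalMat_bind_left]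
  refine hm _ (fun s hs => ?_)
  rw [evalMat_bind_left]
  exact hTU s hs f hf

lemma evalMat_affine_exists (A B : Matrix (Fin n) (Fin n) K) (f : MvPolynomial (Fin n × Fin n) K) :
    ∃ g : Polynomial K, ∀ s : K, g.eval s = evalMat (A + s • B) f := by
  refine ⟨MvPolynomial.eval₂ (Polynomial.C)
    (fun p => Polynomial.C (A p.1 p.2) + Polynomial.X * Polynomial.C (B p.1 p.2)) f, fun s => ?_⟩
  have := MvPolynomial.eval₂_comp_left (Polynomial.evalRingHom s) (Polynomial.C : K →+* Polynomial K)
    (fun p : Fin n × Fin n => Polynomial.C (A p.1 p.2) + Polynomial.X * Polynomial.C (B p.1 p.2)) f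
  simp only [Polynomial.coe_evalRingHom] at this
  rw [show (Polynomial.eval s : Polynomial K → K) (MvPolynomial.eval₂ _ _ f) = _ from this]
  unfold evalMat
  rw [← MvPolynomial.eval₂_id]
  have h1 : (Polynomial.evalRingHom s).comp (Polynomial.C : K →+* Polynomial K) = RingHom.id K := by
    ext x; simp
  rw [h1]
  congr 1
  funext p
  rw [Function.comp_apply, Matrix.add_apply, Matrix.smul_apply, smul_eq_mul,
    Polynomial.eval_add, Polynomial.eval_C, Polynomial.eval_mul, Polynomial.eval_C,
    Polynomial.eval_X]

lemma zClosure_of_curve [CharZero K] {T : Set (Matrix (Fin n) (Fin n) K)}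
    (A B : Matrix (Fin n) (Fin n) K)
    (h : ∀ s : K, s ≠ 0 → A + s • B ∈ zClosure T) : A ∈ zClosure T := by
  intro f hf
  obtain ⟨g, hg⟩ := evalMat_affine_exists A B f
  have hginf : {x : K | g.IsRoot x}.Infinite := by
    apply Set.Infinite.mono (s := {(0:K)}ᶜ)
    · intro s hs
      have : s ≠ 0 := hs
      simp only [Set.mem_setOf_eq, Polynomial.IsRoot]
      rw [hg s]
      exact h s this f hf
    · exact Set.Finite.infinite_compl (Set.finite_singleton 0)
  have hg0 : g = 0 := Polynomial.eq_zero_of_infinite_isRoot _ hginf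
  have := hg 0
  rw [hg0] at this
  simpa using this.symm

lemma one_add_std_mul_apply (a b : Fin n) (t : K) (M : Matrix (Fin n) (Fin n) K) (k l : Fin n) :
    ((1 + single a b t) * M) k l = M k l + (if k = a then t * M b l else 0) := by
  rw [add_mul, one_mul, Matrix.add_apply]
  congr 1
  by_cases h : k = a
  · subst h; rw [Matrix.single_mul_apply_same]; simp
  · rw [Matrix.single_mul_apply_of_ne _ _ _ _ _ h]; simp [h]

lemma mul_one_add_std_apply (a b : Fin n) (t : K) (M : Matrix (Fin n) (Fin n) K) (k l : Fin n) :
    (M * (1 + single a b t)) k l = M k l + (if l = b then M k a * t else 0) := by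
  rw [mul_add, mul_one, Matrix.add_apply]
  congr 1
  by_cases h : l = b
  · subst h; rw [Matrix.mul_single_apply_same]; simp
  · rw [Matrix.mul_single_apply_of_ne _ _ _ _ _ h]; simp [h]

lemma permMat_apply (w : Equiv.Perm (Fin n)) (k l : Fin n) :
    permMat K w k l = if w l = k then 1 else 0 := rfl

lemma permMat_mul_apply (w : Equiv.Perm (Fin n)) (M : Matrix (Fin n) (Fin n) K) (k l : Fin n) :
    (permMat K w * M) k l = M (w⁻¹ k) l := by
  rw [Matrix.mul_apply]
  rw [Finset.sum_eq_single (w⁻¹ k)]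
  · rw [permMat_apply]; simp
  · intro j _ hj
    rw [permMat_apply, if_neg, zero_mul]
    intro h; exact hj (by rw [← h]; simp)
  · simp

lemma mul_permMat_apply (M : Matrix (Fin n) (Fin n) K) (w : Equiv.Perm (Fin n)) (k l : Fin n) :
    (M * permMat K w) k l = M k (w l) := by
  rw [Matrix.mul_apply]
  rw [Finset.sum_eq_single (w l)]
  · rw [permMat_apply]; simp
  · intro j _ hj
    rw [permMat_apply, if_neg (fun h => hj h.symm), mul_zero]
  · simp

lemma permMat_mul (σ τ : Equiv.Perm (Fin n)) :
    permMat K (σ * τ) = permMat K σ * permMat K τ := by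
  ext k l
  rw [permMat_mul_apply, permMat_apply, permMat_apply, Equiv.Perm.mul_apply]
  congr 1
  simp only [eq_iff_iff]
  constructor
  · intro h; rw [← h]; simp
  · intro h; rw [h]; simp

lemma permMat_one : permMat K (1 : Equiv.Perm (Fin n)) = 1 := by
  ext k l
  rw [permMat_apply, Matrix.one_apply]
  simp [eq_comm]

lemma isUnit_of_mul_both {M N : Matrix (Fin n) (Fin n) K} (h1 : M * N = 1) (h2 : N * M = 1) :
    IsUnit M := ⟨⟨M, N, h1, h2⟩, rfl⟩

lemma isUnit_permMat (w : Equiv.Perm (Fin n)) : IsUnit (permMat K w) :=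
  isUnit_of_mul_both (M := permMat K w) (N := permMat K w⁻¹)
    (by rw [← permMat_mul, mul_inv_cancel, permMat_one])
    (by rw [← permMat_mul, inv_mul_cancel, permMat_one])

lemma one_mem_upperB : (1 : Matrix (Fin n) (Fin n) K) ∈ upperB K n :=
  ⟨isUnit_one, fun i j h => Matrix.one_apply_ne (ne_of_gt h)⟩

lemma mul_mem_upperB {a b : Matrix (Fin n) (Fin n) K} (ha : a ∈ upperB K n)
    (hb : b ∈ upperB K n) : a * b ∈ upperB K n := by
  refine ⟨ha.1.mul hb.1, fun i j h => ?_⟩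
  rw [Matrix.mul_apply]
  apply Finset.sum_eq_zero
  intro k _
  by_cases hk : k < i
  · rw [ha.2 i k hk, zero_mul]
  · rw [hb.2 k j (lt_of_lt_of_le h (not_lt.mp hk)), mul_zero]

lemma blockTriangular_of_upperB {b : Matrix (Fin n) (Fin n) K} (hb : b ∈ upperB K n) :
    b.BlockTriangular id := fun i j h => hb.2 i j h

lemma mem_upperB_of_triangular {b : Matrix (Fin n) (Fin n) K}
    (htri : ∀ i j : Fin n, j < i → b i j = 0) (hdiag : ∀ i, b i i ≠ 0) :
    b ∈ upperB K n := by
  refine ⟨(Matrix.isUnit_iff_isUnit_det b).mpr (isUnit_iff_ne_zero.mpr ?_), htri⟩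
  rw [Matrix.det_of_upperTriangular (fun i j h => htri i j h)]
  exact Finset.prod_ne_zero_iff.mpr (fun i _ => hdiag i)

lemma diag_ne_zero_of_upperB {b : Matrix (Fin n) (Fin n) K} (hb : b ∈ upperB K n) (i : Fin n) :
    b i i ≠ 0 := by
  have hdet : b.det ≠ 0 :=
    isUnit_iff_ne_zero.mp ((Matrix.isUnit_iff_isUnit_det b).mp hb.1)
  rw [Matrix.det_of_upperTriangular (blockTriangular_of_upperB hb)] at hdet
  intro h
  exact hdet (Finset.prod_eq_zero (Finset.mem_univ i) h)

lemma std_mul_std_zero {a b c d : Fin n} (h : b ≠ c) (s t : K) :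
    single a b s * single c d t = 0 :=
  Matrix.single_mul_single_of_ne s a b c h t

lemma one_add_std_mul_one_add_std_neg {a b : Fin n} (h : a ≠ b) (t : K) :
    (1 + single a b t) * (1 + single a b (-t)) = 1 := by
  rw [add_mul, one_mul, mul_add, mul_one, std_mul_std_zero h.symm t (-t), add_zero,
    add_assoc, ← Matrix.single_add, neg_add_cancel, Matrix.single_zero, add_zero]

lemma isUnit_one_add_std {a b : Fin n} (h : a ≠ b) (t : K) :
    IsUnit (1 + single a b t) :=
  isUnit_of_mul_both (one_add_std_mul_one_add_std_neg h t)
    (by have := one_add_std_mul_one_add_std_neg h (-t); rwa [neg_neg] at this)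

lemma mem_upperB_one_add_std {a b : Fin n} (h : a < b) (t : K) :
    (1 + single a b t) ∈ upperB K n := by
  refine ⟨isUnit_one_add_std (ne_of_lt h) t, fun i j hij => ?_⟩
  rw [Matrix.add_apply, Matrix.one_apply_ne (ne_of_gt hij),
    Matrix.single_apply_of_ne _ _ _ _ _ (by rintro ⟨rfl, rfl⟩; exact absurd (hij.trans h) (lt_irrefl _)), add_zero]

def flo {n : ℕ} (i : {i : ℕ // i + 1 < n}) : Fin n := ⟨i.1, Nat.lt_of_succ_lt i.2⟩
def fhi {n : ℕ} (i : {i : ℕ // i + 1 < n}) : Fin n := ⟨i.1 + 1, i.2⟩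

lemma flo_lt_fhi {n : ℕ} (i : {i : ℕ // i + 1 < n}) : flo i < fhi i := by
  simp [flo, fhi, Fin.lt_def]

lemma flo_ne_fhi {n : ℕ} (i : {i : ℕ // i + 1 < n}) : flo i ≠ fhi i :=
  ne_of_lt (flo_lt_fhi i)

lemma std_apply {a b k l : Fin n} (t : K) :
    single a b t k l = if a = k ∧ b = l then t else 0 := rfl

lemma swap_lt_iff {i : {i : ℕ // i + 1 < n}} (x y : Fin n)
    (h1 : ¬(x = flo i ∧ y = fhi i)) (h2 : ¬(x = fhi i ∧ y = flo i)) :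
    Equiv.swap (flo i) (fhi i) x < Equiv.swap (flo i) (fhi i) y ↔ x < y := by
  obtain ⟨iv, hiv⟩ := i
  rcases x with ⟨xv, hx⟩
  rcases y with ⟨yv, hy⟩
  simp only [flo, fhi, Equiv.swap_apply_def, Fin.ext_iff, Fin.lt_def] at *
  split_ifs <;> simp_all [Fin.lt_def, Fin.ext_iff] <;> omega

-- I1
lemma factor_upperB_mul_elem {b : Matrix (Fin n) (Fin n) K} (hb : b ∈ upperB K n)
    (i : {i : ℕ // i + 1 < n}) (t : K)
    (hα : b (flo i) (flo i) + b (flo i) (fhi i) * t ≠ 0) :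
    ∃ t' : K, ∃ b₂ ∈ upperB K n,
      b * (1 + single (fhi i) (flo i) t) = (1 + single (fhi i) (flo i) t') * b₂ := by
  set c := flo i with hc
  set a := fhi i with ha
  have hca : c < a := flo_lt_fhi i
  have hac : a ≠ c := (flo_ne_fhi i).symm
  set α := b c c + b c a * t with hαdef
  set M := b * (1 + single a c t) with hM
  set t' := b a a * t / α with ht'
  have hMapply : ∀ k l, M k l = b k l + (if l = c then b k a * t else 0) := by
    intro k l; rw [hM, mul_one_add_std_apply]
  refine ⟨t', (1 + single a c (-t')) * M, ⟨?_, ?_⟩, ?_⟩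
  · exact (isUnit_one_add_std hac (-t')).mul (hb.1.mul (isUnit_one_add_std hac t))
  · intro k l hlk
    rw [one_add_std_mul_apply, hMapply, hMapply]
    by_cases hk : k = a
    · subst hk
      by_cases hl : l = c
      · subst hl
        have hbac : b a c = 0 := hb.2 a c hca
        rw [if_pos rfl, if_pos rfl, if_pos rfl, hbac, zero_add, ht']
        field_simp
        rw [hαdef]; ring
      · have h1 : b a l = 0 := hb.2 a l hlk
        have h2 : b c l = 0 := by
          apply hb.2 c l
          rcases lt_or_ge l c with h | h
          · exact h
          · exfalso
            have : l = c := by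
              have h3 : l.1 < a.1 := hlk
              have h4 : c.1 ≤ l.1 := h
              have : a.1 = c.1 + 1 := rfl
              exact Fin.ext (by omega)
            exact hl this
        rw [if_neg hl, if_neg hl, h1, h2, if_pos rfl]
        ring
    · rw [if_neg hk]
      have h1 : b k l = 0 := hb.2 k l hlk
      by_cases hl : l = c
      · subst hl
        have hka : a < k := by
          rcases lt_or_ge a k with h | h
          · exact h
          · exfalso
            have h3 : k.1 ≤ a.1 := h
            have h4 : c.1 < k.1 := hlk
            have : a.1 = c.1 + 1 := rfl
            exact hk (Fin.ext (by omega))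
        rw [if_pos rfl, hb.2 k a hka, h1]
        ring
      · rw [if_neg hl, h1]
        ring
  · rw [← mul_assoc, one_add_std_mul_one_add_std_neg hac, one_mul, hM]

def Dmat (i : {i : ℕ // i + 1 < n}) (s : K) : Matrix (Fin n) (Fin n) K :=
  1 + single (flo i) (flo i) (s - 1) + single (flo i) (fhi i) 1
    + single (fhi i) (fhi i) (-s⁻¹ - 1)

lemma Dmat_apply (i : {i : ℕ // i + 1 < n}) (s : K) (k l : Fin n) :
    Dmat i s k l = (if k = l then 1 else 0) + (if flo i = k ∧ flo i = l then s - 1 else 0)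
      + (if flo i = k ∧ fhi i = l then 1 else 0)
      + (if fhi i = k ∧ fhi i = l then -s⁻¹ - 1 else 0) := by
  simp only [Dmat, Matrix.add_apply, Matrix.one_apply, std_apply]

lemma Dmat_mem_upperB (i : {i : ℕ // i + 1 < n}) {s : K} (hs : s ≠ 0) :
    Dmat i s ∈ upperB K n := by
  have hca := flo_lt_fhi i
  have hne := flo_ne_fhi i
  apply mem_upperB_of_triangular
  · intro k l hlk
    rw [Dmat_apply]
    rw [if_neg (ne_of_gt hlk), if_neg, if_neg, if_neg]
    · ring
    · rintro ⟨rfl, rfl⟩; exact absurd hlk (lt_irrefl _)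
    · rintro ⟨rfl, rfl⟩; exact absurd (hca.trans hlk) (lt_irrefl _)
    · rintro ⟨rfl, rfl⟩; exact absurd hlk (lt_irrefl _)
  · intro k
    rw [Dmat_apply, if_pos rfl]
    by_cases h1 : flo i = k
    · rw [if_pos ⟨h1, h1⟩, if_neg (fun h => hne (h1.trans h.2.symm)),
        if_neg (fun h => hne (h1.trans h.1.symm))]
      have : (1 : K) + (s - 1) + 0 + 0 = s := by ring
      rw [this]; exact hs
    · by_cases h2 : fhi i = k
      · rw [if_neg (fun h => h1 h.1), if_neg (fun h => h1 h.1), if_pos ⟨h2, h2⟩]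
        have : (1 : K) + 0 + 0 + (-s⁻¹ - 1) = -s⁻¹ := by ring
        rw [this]
        simpa using inv_ne_zero hs
      · rw [if_neg (fun h => h1 h.1), if_neg (fun h => h1 h.1), if_neg (fun h => h2 h.1)]
        simp

-- (I3): δ(s) = x₋(s⁻¹) · D(s)
lemma delta_factor (i : {i : ℕ // i + 1 < n}) {s : K} (hs : s ≠ 0) :
    permMat K (Equiv.swap (flo i) (fhi i)) + s • single (flo i) (flo i) (1 : K)
      = (1 + single (fhi i) (flo i) s⁻¹) * Dmat i s := by
  have hca : flo i < fhi i := flo_lt_fhi i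
  have hne : flo i ≠ fhi i := flo_ne_fhi i
  ext k l
  rw [Matrix.add_apply, Matrix.smul_apply, one_add_std_mul_apply, Dmat_apply, Dmat_apply,
    permMat_apply, std_apply, Equiv.swap_apply_def]
  by_cases hkc : k = flo i <;> by_cases hka : k = fhi i <;>
    by_cases hlc : l = flo i <;> by_cases hla : l = fhi i <;>
    simp_all [hne, hne.symm, smul_eq_mul, eq_comm] <;> field_simp

lemma permMat_swap_mul_self (i : {i : ℕ // i + 1 < n}) :
    permMat K (Equiv.swap (flo i) (fhi i)) * permMat K (Equiv.swap (flo i) (fhi i)) = 1 := by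
  rw [← permMat_mul, Equiv.swap_mul_self, permMat_one]

-- (I5): x₋(t) = x₊(t⁻¹) · ŝ · D(t)
lemma elem_lower_factor (i : {i : ℕ // i + 1 < n}) {t : K} (ht : t ≠ 0) :
    (1 : Matrix (Fin n) (Fin n) K) + single (fhi i) (flo i) t
      = (1 + single (flo i) (fhi i) t⁻¹) *
        (permMat K (Equiv.swap (flo i) (fhi i)) * Dmat i t) := by
  have hca : flo i < fhi i := flo_lt_fhi i
  have hne : flo i ≠ fhi i := flo_ne_fhi i
  ext k l
  rw [Matrix.add_apply, one_add_std_mul_apply, permMat_mul_apply, permMat_mul_apply,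
    Dmat_apply, Dmat_apply, Matrix.one_apply, std_apply]
  rw [Equiv.swap_inv]
  by_cases hkc : k = flo i <;> by_cases hka : k = fhi i <;>
    by_cases hlc : l = flo i <;> by_cases hla : l = fhi i <;>
    simp_all [Equiv.swap_apply_def, hne, hne.symm, eq_comm] <;> field_simp

-- x₋α(t) ŵ = ŵ (1 + E_{w⁻¹a, w⁻¹c} t)
lemma elem_mul_permMat (a c : Fin n) (t : K) (w : Equiv.Perm (Fin n)) :
    (1 + single a c t) * permMat K w
      = permMat K w * (1 + single (w⁻¹ a) (w⁻¹ c) t) := by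
  ext k l
  rw [mul_one_add_std_apply, one_add_std_mul_apply, permMat_apply, permMat_apply]
  congr 1
  by_cases hl : w l = c
  · have hl' : l = w⁻¹ c := by rw [← hl]; simp
    rw [if_pos hl', if_pos hl, permMat_apply, Equiv.Perm.apply_inv_self]
    by_cases hk : k = a
    · rw [if_pos hk, if_pos hk.symm, mul_one, one_mul]
    · rw [if_neg hk, if_neg (fun h => hk h.symm), zero_mul]
  · have hl2 : l ≠ w⁻¹ c := fun h => hl (by rw [h]; exact w.apply_inv_self c)
    rw [if_neg hl, if_neg hl2]
    simp

-- (I4a): for b' ∈ B there is a factorization b' = b₀ * (1 + E_{c,a} c') with b₀ c a = 0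
lemma factor_upperB_right_elem {b : Matrix (Fin n) (Fin n) K} (hb : b ∈ upperB K n)
    (i : {i : ℕ // i + 1 < n}) :
    ∃ c' : K, ∃ b₀ ∈ upperB K n, b₀ (flo i) (fhi i) = 0 ∧
      b = b₀ * (1 + single (flo i) (fhi i) c') := by
  have hca : flo i < fhi i := flo_lt_fhi i
  have hne : flo i ≠ fhi i := flo_ne_fhi i
  set c' := b (flo i) (fhi i) / b (flo i) (flo i) with hc'
  refine ⟨c', b * (1 + single (flo i) (fhi i) (-c')), ⟨?_, ?_⟩, ?_, ?_⟩
  · exact hb.1.mul (isUnit_one_add_std hne (-c'))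
  · intro k l hlk
    rw [mul_one_add_std_apply, hb.2 k l hlk]
    by_cases hl : l = fhi i
    · rw [if_pos hl]
      have hkc : flo i < k := by
        have h1 : (fhi i).1 = (flo i).1 + 1 := rfl
        have h2 : l.1 < k.1 := hlk
        have h3 : l.1 = (fhi i).1 := by rw [hl]
        exact (Fin.lt_def).mpr (by omega)
      rw [hb.2 k (flo i) hkc]
      ring
    · rw [if_neg hl]; ring
  · rw [mul_one_add_std_apply, if_pos rfl, hc']
    have hcc : b (flo i) (flo i) ≠ 0 := diag_ne_zero_of_upperB hb (flo i)
    field_simp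
    ring
  · rw [mul_assoc]
    have : (1 + single (flo i) (fhi i) (-c')) * (1 + single (flo i) (fhi i) c')
        = 1 := by
      have := one_add_std_mul_one_add_std_neg hne (-c')
      rwa [neg_neg] at this
    rw [this, mul_one]

-- (I4b): conjugation of b₀ (with b₀ c a = 0) by ŝ stays in B
lemma swap_conj_mem_upperB {b : Matrix (Fin n) (Fin n) K} (hb : b ∈ upperB K n)
    (i : {i : ℕ // i + 1 < n}) (hz : b (flo i) (fhi i) = 0) :
    permMat K (Equiv.swap (flo i) (fhi i)) * b * permMat K (Equiv.swap (flo i) (fhi i))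
      ∈ upperB K n := by
  have hca : flo i < fhi i := flo_lt_fhi i
  refine ⟨(isUnit_permMat _).mul hb.1 |>.mul (isUnit_permMat _), fun k l hlk => ?_⟩
  rw [mul_permMat_apply, permMat_mul_apply, Equiv.swap_inv]
  by_cases hbad : l = flo i ∧ k = fhi i
  · rw [hbad.1, hbad.2, Equiv.swap_apply_left, Equiv.swap_apply_right]
    exact hz
  · have : Equiv.swap (flo i) (fhi i) l < Equiv.swap (flo i) (fhi i) k := by
      rw [swap_lt_iff]
      · exact hlk
      · exact hbad
      · rintro ⟨rfl, rfl⟩; exact absurd (hca.trans hlk) (lt_irrefl _)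
    exact hb.2 _ _ this

lemma coxLength_one : coxLength (1 : Equiv.Perm (Fin n)) = 0 := by
  rw [coxLength, Finset.card_eq_zero, Finset.filter_eq_empty_iff]
  rintro ⟨p, q⟩ _
  simp only [Equiv.Perm.one_apply, not_and]
  exact fun h1 h2 => absurd (h1.trans h2) (lt_irrefl _)

lemma coxLength_swap_mul_of_lt (i : {i : ℕ // i + 1 < n}) (u : Equiv.Perm (Fin n))
    (h : u⁻¹ (flo i) < u⁻¹ (fhi i)) :
    coxLength (Equiv.swap (flo i) (fhi i) * u) = coxLength u + 1 := by
  have hca : flo i < fhi i := flo_lt_fhi i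
  set s := Equiv.swap (flo i) (fhi i) with hs
  set v := s * u with hv
  set p₀ := u⁻¹ (flo i) with hp₀
  set q₀ := u⁻¹ (fhi i) with hq₀
  have hup : u p₀ = flo i := u.apply_inv_self _
  have huq : u q₀ = fhi i := u.apply_inv_self _
  have key : (Finset.univ.filter (fun p : Fin n × Fin n => p.1 < p.2 ∧ v p.2 < v p.1))
      = insert (p₀, q₀)
        (Finset.univ.filter (fun p : Fin n × Fin n => p.1 < p.2 ∧ u p.2 < u p.1)) := by
    ext x
    obtain ⟨p, q⟩ := x
    simp only [Finset.mem_filter, Finset.mem_insert, Finset.mem_univ, true_and,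
      Prod.mk.injEq, hv, Equiv.Perm.mul_apply]
    constructor
    · rintro ⟨hpq, hinv⟩
      by_cases hc : p = p₀ ∧ q = q₀
      · exact Or.inl hc
      · refine Or.inr ⟨hpq, ?_⟩
        rw [← swap_lt_iff (i := i) (u q) (u p) ?_ ?_]
        · exact hinv
        · rintro ⟨h1, h2⟩
          have hqp : q = p₀ := by rw [hp₀, ← h1, Equiv.Perm.inv_apply_self]
          have hpq' : p = q₀ := by rw [hq₀, ← h2, Equiv.Perm.inv_apply_self]
          rw [hqp, hpq'] at hpq
          exact absurd (h.trans hpq) (lt_irrefl _)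
        · rintro ⟨h1, h2⟩
          exact hc ⟨by rw [hp₀, ← h2, Equiv.Perm.inv_apply_self],
            by rw [hq₀, ← h1, Equiv.Perm.inv_apply_self]⟩
    · rintro (⟨rfl, rfl⟩ | ⟨hpq, hinv⟩)
      · refine ⟨h, ?_⟩
        rw [hup, huq, Equiv.swap_apply_left, Equiv.swap_apply_right]
        exact hca
      · refine ⟨hpq, ?_⟩
        rw [swap_lt_iff (i := i) (u q) (u p) ?_ ?_]
        · exact hinv
        · rintro ⟨h1, h2⟩
          have hqp : q = p₀ := by rw [hp₀, ← h1, Equiv.Perm.inv_apply_self]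
          have hpq' : p = q₀ := by rw [hq₀, ← h2, Equiv.Perm.inv_apply_self]
          rw [hqp, hpq'] at hpq
          exact absurd (h.trans hpq) (lt_irrefl _)
        · rintro ⟨h1, h2⟩
          have hqq : q = q₀ := by rw [hq₀, ← h1, Equiv.Perm.inv_apply_self]
          have hpp : p = p₀ := by rw [hp₀, ← h2, Equiv.Perm.inv_apply_self]
          rw [hqq, hpp] at hinv
          rw [hup, huq] at hinv
          exact absurd (hca.trans hinv) (lt_irrefl _)
  rw [coxLength, key, Finset.card_insert_of_notMem, coxLength]
  intro hmem
  rw [Finset.mem_filter] at hmem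
  have := hmem.2.2
  rw [hup, huq] at this
  exact absurd (hca.trans this) (lt_irrefl _)

lemma coxLength_swap_mul_of_gt (i : {i : ℕ // i + 1 < n}) (u : Equiv.Perm (Fin n))
    (h : u⁻¹ (fhi i) < u⁻¹ (flo i)) :
    coxLength (Equiv.swap (flo i) (fhi i) * u) + 1 = coxLength u := by
  have hca : flo i < fhi i := flo_lt_fhi i
  set s := Equiv.swap (flo i) (fhi i) with hs
  set v := s * u with hv
  set p₀ := u⁻¹ (flo i) with hp₀
  set q₀ := u⁻¹ (fhi i) with hq₀
  have hup : u p₀ = flo i := u.apply_inv_self _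
  have huq : u q₀ = fhi i := u.apply_inv_self _
  have key : (Finset.univ.filter (fun p : Fin n × Fin n => p.1 < p.2 ∧ u p.2 < u p.1))
      = insert (q₀, p₀)
        (Finset.univ.filter (fun p : Fin n × Fin n => p.1 < p.2 ∧ v p.2 < v p.1)) := by
    ext x
    obtain ⟨p, q⟩ := x
    simp only [Finset.mem_filter, Finset.mem_insert, Finset.mem_univ, true_and,
      Prod.mk.injEq, hv, Equiv.Perm.mul_apply]
    constructor
    · rintro ⟨hpq, hinv⟩
      by_cases hc : p = q₀ ∧ q = p₀
      · exact Or.inl hc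
      · refine Or.inr ⟨hpq, ?_⟩
        rw [swap_lt_iff (i := i) (u q) (u p) ?_ ?_]
        · exact hinv
        · rintro ⟨h1, h2⟩
          exact hc ⟨by rw [hq₀, ← h2, Equiv.Perm.inv_apply_self],
            by rw [hp₀, ← h1, Equiv.Perm.inv_apply_self]⟩
        · rintro ⟨h1, h2⟩
          have hqq : q = q₀ := by rw [hq₀, ← h1, Equiv.Perm.inv_apply_self]
          have hpp : p = p₀ := by rw [hp₀, ← h2, Equiv.Perm.inv_apply_self]
          rw [hqq, hpp] at hpq
          exact absurd (h.trans hpq) (lt_irrefl _)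
    · rintro (⟨rfl, rfl⟩ | ⟨hpq, hinv⟩)
      · refine ⟨h, ?_⟩
        rw [hup, huq]
        exact hca
      · refine ⟨hpq, ?_⟩
        rw [← swap_lt_iff (i := i) (u q) (u p) ?_ ?_]
        · exact hinv
        · rintro ⟨h1, h2⟩
          have hqp : q = p₀ := by rw [hp₀, ← h1, Equiv.Perm.inv_apply_self]
          have hpq' : p = q₀ := by rw [hq₀, ← h2, Equiv.Perm.inv_apply_self]
          rw [hqp, hpq'] at hinv
          rw [hup, huq] at hinv
          simp only [hs] at hinv
          rw [Equiv.swap_apply_left, Equiv.swap_apply_right] at hinv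
          exact absurd (hca.trans hinv) (lt_irrefl _)
        · rintro ⟨h1, h2⟩
          have hqq : q = q₀ := by rw [hq₀, ← h1, Equiv.Perm.inv_apply_self]
          have hpp : p = p₀ := by rw [hp₀, ← h2, Equiv.Perm.inv_apply_self]
          rw [hqq, hpp] at hpq
          exact absurd (h.trans hpq) (lt_irrefl _)
  rw [coxLength, coxLength, key, Finset.card_insert_of_notMem]
  intro hmem
  rw [Finset.mem_filter] at hmem
  have := hmem.2.2
  simp only [hv, Equiv.Perm.mul_apply] at this
  rw [hup, huq] at this
  simp only [hs] at this
  rw [Equiv.swap_apply_left, Equiv.swap_apply_right] at this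
  exact absurd (hca.trans this) (lt_irrefl _)

lemma coxLength_word_le (L : List {i : ℕ // i + 1 < n}) :
    coxLength ((L.map (fun i => Equiv.swap (flo i) (fhi i))).prod) ≤ L.length := by
  induction L with
  | nil => simp [coxLength_one]
  | cons i L ih =>
    rw [List.map_cons, List.prod_cons, List.length_cons]
    set u := (L.map (fun i => Equiv.swap (flo i) (fhi i))).prod with hu
    rcases lt_trichotomy (u⁻¹ (flo i)) (u⁻¹ (fhi i)) with h | h | h
    · rw [coxLength_swap_mul_of_lt i u h]; omega
    · exact absurd (u⁻¹.injective h) (flo_ne_fhi i)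
    · have := coxLength_swap_mul_of_gt i u h; omega

def SFr (K : Type) [Field K] {n : ℕ} (idx : List {i : ℕ // i + 1 < n}) :
    Set (Matrix (Fin n) (Fin n) K) :=
  {m | ∃ t : Fin idx.length → K, ∃ b ∈ upperB K n,
      m = (List.ofFn fun k : Fin idx.length =>
        (1 : Matrix (Fin n) (Fin n) K) +
          single (fhi (idx.get k)) (flo (idx.get k)) (t k)).prod * b}

def SNz (K : Type) [Field K] {n : ℕ} (idx : List {i : ℕ // i + 1 < n}) :
    Set (Matrix (Fin n) (Fin n) K) :=
  {m | ∃ t : Fin idx.length → K, (∀ k, t k ≠ 0) ∧ ∃ b ∈ upperB K n,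
      m = (List.ofFn fun k : Fin idx.length =>
        (1 : Matrix (Fin n) (Fin n) K) +
          single (fhi (idx.get k)) (flo (idx.get k)) (t k)).prod * b}

lemma ofFn_prod_cons (i : {i : ℕ // i + 1 < n}) (idx : List {i : ℕ // i + 1 < n})
    (t : Fin (idx.length + 1) → K) :
    (List.ofFn fun k : Fin ((i :: idx : List _).length) =>
        (1 : Matrix (Fin n) (Fin n) K) +
          single (fhi ((i :: idx : List _).get k)) (flo ((i :: idx : List _).get k)) (t k)).prod
      = (1 + single (fhi i) (flo i) (t 0)) *
        (List.ofFn fun k : Fin idx.length =>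
          (1 : Matrix (Fin n) (Fin n) K) +
            single (fhi (idx.get k)) (flo (idx.get k)) (t k.succ)).prod := by
  rw [List.ofFn_succ, List.prod_cons]
  rfl

lemma mem_SFr_nil {m : Matrix (Fin n) (Fin n) K} :
    m ∈ SFr K ([] : List {i : ℕ // i + 1 < n}) ↔ m ∈ upperB K n := by
  constructor
  · rintro ⟨t, b, hb, rfl⟩
    simpa using hb
  · intro hm
    exact ⟨fun k => 0, m, hm, by simp⟩

lemma mem_SNz_nil {m : Matrix (Fin n) (Fin n) K} :
    m ∈ SNz K ([] : List {i : ℕ // i + 1 < n}) ↔ m ∈ upperB K n := by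
  constructor
  · rintro ⟨t, _, b, hb, rfl⟩
    simpa using hb
  · intro hm
    exact ⟨fun k => k.elim0, fun k => k.elim0, m, hm, by simp⟩

lemma mem_SFr_cons {i : {i : ℕ // i + 1 < n}} {idx : List {i : ℕ // i + 1 < n}}
    {m : Matrix (Fin n) (Fin n) K} :
    m ∈ SFr K (i :: idx) ↔ ∃ t : K, ∃ m' ∈ SFr K idx,
      m = (1 + single (fhi i) (flo i) t) * m' := by
  constructor
  · rintro ⟨t, b, hb, rfl⟩
    refine ⟨t ⟨0, Nat.succ_pos idx.length⟩, _, ⟨fun k => t k.succ, b, hb, rfl⟩, ?_⟩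
    rw [ofFn_prod_cons, mul_assoc]
    rfl
  · rintro ⟨s, m', ⟨t', b, hb, rfl⟩, rfl⟩
    refine ⟨Fin.cons s t', b, hb, ?_⟩
    rw [ofFn_prod_cons, mul_assoc]
    simp only [Fin.cons_zero, Fin.cons_succ]

lemma mem_SNz_cons {i : {i : ℕ // i + 1 < n}} {idx : List {i : ℕ // i + 1 < n}}
    {m : Matrix (Fin n) (Fin n) K} :
    m ∈ SNz K (i :: idx) ↔ ∃ t : K, t ≠ 0 ∧ ∃ m' ∈ SNz K idx,
      m = (1 + single (fhi i) (flo i) t) * m' := by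
  constructor
  · rintro ⟨t, ht, b, hb, rfl⟩
    refine ⟨t ⟨0, Nat.succ_pos idx.length⟩, ht ⟨0, Nat.succ_pos idx.length⟩, _,
      ⟨fun k => t k.succ, fun k => ht k.succ, b, hb, rfl⟩, ?_⟩
    rw [ofFn_prod_cons, mul_assoc]
    rfl
  · rintro ⟨s, hs, m', ⟨t', ht', b, hb, rfl⟩, rfl⟩
    refine ⟨Fin.cons s t', ?_, b, hb, ?_⟩
    · intro k
      refine Fin.cases ?_ ?_ k
      · simpa using hs
      · intro j; simpa using ht' j
    · rw [ofFn_prod_cons, mul_assoc]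
      simp only [Fin.cons_zero, Fin.cons_succ]

lemma zClosure_of_curve' [CharZero K] {T : Set (Matrix (Fin n) (Fin n) K)}
    (A B : Matrix (Fin n) (Fin n) K) (F : Set K) (hF : F.Finite)
    (h : ∀ s ∉ F, A + s • B ∈ zClosure T) (s₀ : K) : A + s₀ • B ∈ zClosure T := by
  intro f hf
  obtain ⟨g, hg⟩ := evalMat_affine_exists A B f
  have hg0 : g = 0 := by
    apply Polynomial.eq_zero_of_infinite_isRoot
    apply Set.Infinite.mono (s := Fᶜ)
    · intro s hs
      simp only [Set.mem_setOf_eq, Polynomial.IsRoot]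
      rw [hg s]
      exact h s hs f hf
    · exact Set.Finite.infinite_compl hF
  rw [← hg s₀, hg0, Polynomial.eval_zero]

lemma mul_add_smul_mul (b P Q x : Matrix (Fin n) (Fin n) K) (s : K) :
    b * ((P + s • Q) * x) = b * (P * x) + s • (b * (Q * x)) := by
  rw [add_mul, Matrix.smul_mul, mul_add, Matrix.mul_smul]

lemma std_add_smul (a c : Fin n) (t s : K) :
    single a c (t + s) = single a c t + s • single a c 1 := by
  rw [smul_single, smul_eq_mul, mul_one, Matrix.single_add]

lemma upperB_mul_SFr [CharZero K] (idx : List {i : ℕ // i + 1 < n}) :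
    ∀ b ∈ upperB K n, ∀ m ∈ SFr K idx, b * m ∈ zClosure (SFr K idx) := by
  induction idx with
  | nil =>
    intro b hb m hm
    exact subset_zClosure _ (mem_SFr_nil.mpr (mul_mem_upperB hb (mem_SFr_nil.mp hm)))
  | cons i idx ih =>
    intro b hb m hm
    obtain ⟨t, m', hm', rfl⟩ := mem_SFr_cons.mp hm
    have key : ∀ t : K, b (flo i) (flo i) + b (flo i) (fhi i) * t ≠ 0 →
        b * ((1 + single (fhi i) (flo i) t) * m') ∈ zClosure (SFr K (i :: idx)) := by
      intro t hα
      obtain ⟨t', b₂, hb₂, heq⟩ := factor_upperB_mul_elem hb i t hα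
      rw [← mul_assoc, heq, mul_assoc]
      apply mul_mem_zClosure (1 + single (fhi i) (flo i) t')
      · intro y hy
        exact subset_zClosure _ (mem_SFr_cons.mpr ⟨t', y, hy, rfl⟩)
      · exact ih b₂ hb₂ m' hm'
    by_cases hα : b (flo i) (flo i) + b (flo i) (fhi i) * t ≠ 0
    · exact key t hα
    · push_neg at hα
      have hba : b (flo i) (fhi i) ≠ 0 := by
        intro h0
        rw [h0, zero_mul, add_zero] at hα
        exact diag_ne_zero_of_upperB hb (flo i) hα
      have hlin : ∀ s : K, b * ((1 + single (fhi i) (flo i) (t + s)) * m')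
          = b * ((1 + single (fhi i) (flo i) t) * m')
            + s • (b * (single (fhi i) (flo i) 1 * m')) := by
        intro s
        rw [← mul_add_smul_mul]
        congr 2
        rw [std_add_smul, add_assoc]
      have hcurve := zClosure_of_curve' (T := SFr K (i :: idx))
        (b * ((1 + single (fhi i) (flo i) t) * m'))
        (b * (single (fhi i) (flo i) 1 * m')) {0} (Set.finite_singleton 0)
        (fun s hs => by
          rw [← hlin s]
          apply key (t + s)
          rw [mul_add, ← add_assoc, hα, zero_add]
          exact mul_ne_zero hba (by simpa using hs)) 0
      simpa using hcurve

lemma bruhat_subset_zClosure_SFr [CharZero K] (idx : List {i : ℕ // i + 1 < n})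
    (w : Equiv.Perm (Fin n)) (hw : w = (idx.map (fun i => Equiv.swap (flo i) (fhi i))).prod) :
    bruhatCell (K := K) w ⊆ zClosure (SFr K idx) := by
  induction idx generalizing w with
  | nil =>
    rintro m ⟨b₁, hb₁, b₂, hb₂, rfl⟩
    rw [hw]
    simp only [List.map_nil, List.prod_nil]
    rw [permMat_one, mul_one]
    exact subset_zClosure _ (mem_SFr_nil.mpr (mul_mem_upperB hb₁ hb₂))
  | cons i idx ih =>
    rintro m ⟨b₁, hb₁, b₂, hb₂, rfl⟩
    rw [List.map_cons, List.prod_cons] at hw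
    set w' := (idx.map (fun i => Equiv.swap (flo i) (fhi i))).prod with hw'
    have hperm : permMat K w = permMat K (Equiv.swap (flo i) (fhi i)) * permMat K w' := by
      rw [hw, permMat_mul]
    have hm' : permMat K w' * b₂ ∈ bruhatCell (K := K) w' :=
      ⟨1, one_mem_upperB, b₂, hb₂, by rw [one_mul]⟩
    have hm'c : permMat K w' * b₂ ∈ zClosure (SFr K idx) := ih w' rfl hm'
    have hgoal : b₁ * permMat K w * b₂
        = (b₁ * permMat K (Equiv.swap (flo i) (fhi i))) * (permMat K w' * b₂) := by
      rw [hperm, ← mul_assoc, ← mul_assoc]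
    rw [hgoal]
    apply mul_mem_zClosure _ ?_ hm'c
    intro x hx
    have hc := zClosure_of_curve' (T := SFr K (i :: idx))
      (b₁ * (permMat K (Equiv.swap (flo i) (fhi i)) * x))
      (b₁ * (single (flo i) (flo i) 1 * x)) {0} (Set.finite_singleton 0)
      (fun s hs => by
        have hs' : s ≠ 0 := by simpa using hs
        rw [← mul_add_smul_mul, delta_factor i hs', mul_assoc]
        apply mul_mem_zClosure b₁ (upperB_mul_SFr (i :: idx) b₁ hb₁)
        apply mul_mem_zClosure (1 + single (fhi i) (flo i) s⁻¹)
          (fun y hy => subset_zClosure _ (mem_SFr_cons.mpr ⟨s⁻¹, y, hy, rfl⟩))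
        exact upperB_mul_SFr idx (Dmat i s) (Dmat_mem_upperB i hs') x hx) 0
    simp only [zero_smul, add_zero] at hc
    rwa [← mul_assoc] at hc

lemma SFr_subset_zClosure_SNz [CharZero K] (idx : List {i : ℕ // i + 1 < n}) :
    SFr K idx ⊆ zClosure (SNz K idx) := by
  induction idx with
  | nil =>
    intro m hm
    exact subset_zClosure _ (mem_SNz_nil.mpr (mem_SFr_nil.mp hm))
  | cons i idx ih =>
    intro m hm
    obtain ⟨t, m', hm', rfl⟩ := mem_SFr_cons.mp hm
    apply mul_mem_zClosure _ ?_ (ih hm')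
    intro z hz
    have hc := zClosure_of_curve' (T := SNz K (i :: idx))
      z (single (fhi i) (flo i) 1 * z) {0} (Set.finite_singleton 0)
      (fun s hs => by
        have hs' : s ≠ 0 := by simpa using hs
        have : z + s • (single (fhi i) (flo i) 1 * z)
            = (1 + single (fhi i) (flo i) s) * z := by
          rw [add_mul, one_mul, ← Matrix.smul_mul, smul_single, smul_eq_mul, mul_one]
        rw [this]
        exact subset_zClosure _ (mem_SNz_cons.mpr ⟨s, hs', z, hz, rfl⟩)) t
    have : z + t • (single (fhi i) (flo i) 1 * z)
        = (1 + single (fhi i) (flo i) t) * z := by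
      rw [add_mul, one_mul, ← Matrix.smul_mul, smul_single, smul_eq_mul, mul_one]
    rwa [this] at hc

lemma bruhat_mul_left {w : Equiv.Perm (Fin n)} {b m : Matrix (Fin n) (Fin n) K}
    (hb : b ∈ upperB K n) (hm : m ∈ bruhatCell (K := K) w) : b * m ∈ bruhatCell (K := K) w := by
  obtain ⟨b₁, hb₁, b₂, hb₂, rfl⟩ := hm
  exact ⟨b * b₁, mul_mem_upperB hb hb₁, b₂, hb₂, by simp only [mul_assoc]⟩

lemma bruhat_mul_right {w : Equiv.Perm (Fin n)} {b m : Matrix (Fin n) (Fin n) K}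
    (hb : b ∈ upperB K n) (hm : m ∈ bruhatCell (K := K) w) : m * b ∈ bruhatCell (K := K) w := by
  obtain ⟨b₁, hb₁, b₂, hb₂, rfl⟩ := hm
  exact ⟨b₁, hb₁, b₂ * b, mul_mem_upperB hb₂ hb, by simp only [mul_assoc]⟩

-- BN-pair style multiplication lemma
lemma swap_mul_upperB_mul_permMat (i : {i : ℕ // i + 1 < n}) (w' : Equiv.Perm (Fin n))
    (hd : w'⁻¹ (flo i) < w'⁻¹ (fhi i)) {b : Matrix (Fin n) (Fin n) K} (hb : b ∈ upperB K n) :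
    permMat K (Equiv.swap (flo i) (fhi i)) * b * permMat K w'
      ∈ bruhatCell (K := K) (Equiv.swap (flo i) (fhi i) * w') := by
  obtain ⟨c', b₀, hb₀, hz, hfac⟩ := factor_upperB_right_elem hb i
  set s := Equiv.swap (flo i) (fhi i) with hs
  set u₂ := (1 : Matrix (Fin n) (Fin n) K)
    + single (w'⁻¹ (flo i)) (w'⁻¹ (fhi i)) c' with hu₂
  have hu₂B : u₂ ∈ upperB K n := mem_upperB_one_add_std hd c'
  have hb₁B : permMat K s * b₀ * permMat K s ∈ upperB K n := swap_conj_mem_upperB hb₀ i hz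
  refine ⟨permMat K s * b₀ * permMat K s, hb₁B, u₂, hu₂B, ?_⟩
  rw [permMat_mul, hfac]
  have hmove : (1 + single (flo i) (fhi i) c') * permMat K w' = permMat K w' * u₂ := by
    rw [elem_mul_permMat]
  calc permMat K s * (b₀ * (1 + single (flo i) (fhi i) c')) * permMat K w'
      = permMat K s * b₀ * ((1 + single (flo i) (fhi i) c') * permMat K w') := by
        simp only [mul_assoc]
    _ = permMat K s * b₀ * (permMat K w' * u₂) := by rw [hmove]
    _ = permMat K s * b₀ * (permMat K s * permMat K s) * (permMat K w' * u₂) := by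
        rw [permMat_swap_mul_self, mul_one]
    _ = permMat K s * b₀ * permMat K s * (permMat K s * permMat K w') * u₂ := by
        simp only [mul_assoc]
  
lemma SNz_subset_bruhat (idx : List {i : ℕ // i + 1 < n}) (w : Equiv.Perm (Fin n))
    (hw : w = (idx.map (fun i => Equiv.swap (flo i) (fhi i))).prod)
    (hlen : idx.length = coxLength w) :
    SNz K idx ⊆ bruhatCell (K := K) w := by
  induction idx generalizing w with
  | nil =>
    intro m hm
    rw [hw]
    simp only [List.map_nil, List.prod_nil]
    exact ⟨m, mem_SNz_nil.mp hm, 1, one_mem_upperB,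
      by rw [permMat_one, mul_one, mul_one]⟩
  | cons i idx ih =>
    intro m hm
    rw [List.map_cons, List.prod_cons] at hw
    set w' := (idx.map (fun i => Equiv.swap (flo i) (fhi i))).prod with hw'
    have hle : coxLength w' ≤ idx.length := coxLength_word_le idx
    rw [List.length_cons] at hlen
    rcases lt_trichotomy (w'⁻¹ (flo i)) (w'⁻¹ (fhi i)) with hd | he | hg
    · have hcw : coxLength w = coxLength w' + 1 := by
        rw [hw]; exact coxLength_swap_mul_of_lt i w' hd
      have hlen' : idx.length = coxLength w' := by omega
      obtain ⟨t, ht, m', hm', rfl⟩ := mem_SNz_cons.mp hm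
      obtain ⟨b₁, hb₁, b₂, hb₂, hm'eq⟩ := ih w' rfl hlen' hm'
      have hDB : Dmat i t * b₁ ∈ upperB K n := mul_mem_upperB (Dmat_mem_upperB i ht) hb₁
      have hBN := swap_mul_upperB_mul_permMat i w' hd hDB
      rw [← hw] at hBN
      have helem : (1 : Matrix (Fin n) (Fin n) K) + single (flo i) (fhi i) t⁻¹
          ∈ upperB K n := mem_upperB_one_add_std (flo_lt_fhi i) t⁻¹
      have hfinal : (1 + single (fhi i) (flo i) t) * m'
          = (1 + single (flo i) (fhi i) t⁻¹) *
            ((permMat K (Equiv.swap (flo i) (fhi i)) * (Dmat i t * b₁) * permMat K w') * b₂) := by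
        rw [hm'eq, elem_lower_factor i ht]
        simp only [mul_assoc]
      rw [hfinal]
      exact bruhat_mul_left helem (bruhat_mul_right hb₂ hBN)
    · exact absurd (w'⁻¹.injective he) (flo_ne_fhi i)
    · have hgt := coxLength_swap_mul_of_gt i w' hg
      rw [← hw] at hgt
      omega


/-- Let `w = s_{i₁} ⋯ s_{i_l}` be a reduced decomposition into simple
transpositions (`l` is the Coxeter length of `w`).  Then the Zariski closure of
`{x_{-α_{i₁}}(t₁) ⋯ x_{-α_{i_l}}(t_l) · b : tⱼ ∈ K, b ∈ B}`, where
`x_{-α_i}(t) = 1 + t E_{i+1,i}`, equals the Zariski closure of the double coset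
`B ŵ B`; in particular the subset obtained by restricting to nonzero parameters
`tⱼ` is dense in `B ŵ B`. -/
theorem closure_prod_lower_elementary_eq_closure_bruhat
    {K : Type} [Field K] [IsAlgClosed K] [CharZero K] {n : ℕ}
    (w : Equiv.Perm (Fin n)) (idx : List {i : ℕ // i + 1 < n})
    (hred : w = (idx.map (fun i => Equiv.swap
        (⟨i.1, Nat.lt_of_succ_lt i.2⟩ : Fin n) ⟨i.1 + 1, i.2⟩)).prod)
    (hlen : idx.length = coxLength w) :
    zClosure {m : Matrix (Fin n) (Fin n) K | ∃ t : Fin idx.length → K,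
        ∃ b ∈ upperB K n,
        m = (List.ofFn fun k : Fin idx.length =>
              (1 : Matrix (Fin n) (Fin n) K) +
                Matrix.single ⟨(idx.get k).1 + 1, (idx.get k).2⟩
                  ⟨(idx.get k).1, Nat.lt_of_succ_lt (idx.get k).2⟩ (t k)).prod * b} =
      zClosure (bruhatCell (K := K) w) ∧
    bruhatCell (K := K) w ⊆
      zClosure {m : Matrix (Fin n) (Fin n) K | ∃ t : Fin idx.length → K,
        (∀ k, t k ≠ 0) ∧ ∃ b ∈ upperB K n,
        m = (List.ofFn fun k : Fin idx.length =>
              (1 : Matrix (Fin n) (Fin n) K) +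
                Matrix.single ⟨(idx.get k).1 + 1, (idx.get k).2⟩
                  ⟨(idx.get k).1, Nat.lt_of_succ_lt (idx.get k).2⟩ (t k)).prod * b} := by
  have hred' : w = (idx.map (fun i => Equiv.swap (flo i) (fhi i))).prod := hred
  constructor
  · show zClosure (SFr K idx) = zClosure (bruhatCell (K := K) w)
    apply Set.Subset.antisymm
    · apply zClosure_min
      intro m hm
      have h1 : m ∈ zClosure (SNz K idx) := SFr_subset_zClosure_SNz idx hm
      exact zClosure_min
        (fun x hx => subset_zClosure _ (SNz_subset_bruhat idx w hred' hlen hx)) h1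
    · exact zClosure_min (bruhat_subset_zClosure_SFr idx w hred')
  · show bruhatCell (K := K) w ⊆ zClosure (SNz K idx)
    intro m hm
    exact zClosure_min (SFr_subset_zClosure_SNz idx)
      (bruhat_subset_zClosure_SFr idx w hred' hm)
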